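/- arXiv:1602.04592 — 9 statements merged into one kernel-verified Lean document; each statement's English description precedes it below -/
import Mathlib

section
/- For all real numbers x, y with 0 < x < y < 1, the quantity T2(x,y) := max( max(2x, y−x) + (y−x), 1−y ) + (1−y) satisfies T2(x,y) ≥ 8/7, with equality if and only if (x, y) = (1/7, 3/7). Hence the minimum total time for unambiguous transmission between two end nodes at distance L with two intermediate repeater nodes is 8L/(7c). -/
/-- For all reals `0 < x < y < 1`, the two-repeater transmission time
`T2(x,y) = max(max(2x, y-x) + (y-x), 1-y) + (1-y)` is at least `8/7`,
with equality iff `(x, y) = (1/7, 3/7)`. -/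
theorem two_repeater_transmission_time (x y : ℝ) (hx0 : 0 < x) (hxy : x < y) (hy1 : y < 1) :
    8 / 7 ≤ max (max (2 * x) (y - x) + (y - x)) (1 - y) + (1 - y) ∧
    (max (max (2 * x) (y - x) + (y - x)) (1 - y) + (1 - y) = 8 / 7 ↔
      x = 1 / 7 ∧ y = 3 / 7) := by
  have hA := le_max_left (max (2 * x) (y - x) + (y - x)) (1 - y)
  have hB := le_max_right (max (2 * x) (y - x) + (y - x)) (1 - y)
  have hC := le_max_left (2 * x) (y - x)
  have hD := le_max_right (2 * x) (y - x)
  refine ⟨by linarith, ⟨fun h => ⟨by linarith, by linarith⟩, ?_⟩⟩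
  rintro ⟨rfl, rfl⟩
  norm_num
end

section
/- For all real numbers x, y, z with 0 < x < y < z < 1, the quantity T3(x,y,z) := max( max( max(2x, y−x) + (y−x), z−y ) + (z−y), 1−z ) + (1−z) satisfies T3(x,y,z) ≥ 16/15, with equality if and only if (x, y, z) = (1/15, 1/5, 7/15). Hence the minimum total time for unambiguous transmission between two end nodes at distance L with three intermediate repeater nodes is 16L/(15c). -/
/-- For all reals `0 < x < y < z < 1`, the three-repeater transmission time
`T3(x,y,z)` is at least `16/15`, with equality iff `(x,y,z) = (1/15, 1/5, 7/15)`. -/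
theorem three_repeater_transmission_time (x y z : ℝ)
    (hx0 : 0 < x) (hxy : x < y) (hyz : y < z) (hz1 : z < 1) :
    16 / 15 ≤
      max (max (max (2 * x) (y - x) + (y - x)) (z - y) + (z - y)) (1 - z) + (1 - z) ∧
    (max (max (max (2 * x) (y - x) + (y - x)) (z - y) + (z - y)) (1 - z) + (1 - z)
        = 16 / 15 ↔ x = 1 / 15 ∧ y = 1 / 5 ∧ z = 7 / 15) := by
  set m1 := max (2 * x) (y - x) with hm1
  set m2 := max (m1 + (y - x)) (z - y) with hm2
  set m3 := max (m2 + (z - y)) (1 - z) with hm3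
  have h6 : 2 * x ≤ m1 := le_max_left _ _
  have h5 : y - x ≤ m1 := le_max_right _ _
  have h4 : m1 + (y - x) ≤ m2 := le_max_left _ _
  have h3 : z - y ≤ m2 := le_max_right _ _
  have h2 : m2 + (z - y) ≤ m3 := le_max_left _ _
  have h1 : 1 - z ≤ m3 := le_max_right _ _
  refine ⟨by linarith, ?_, ?_⟩
  · intro hT
    have e1 : m3 = 1 - z := le_antisymm (by linarith) h1
    have e2 : m3 = m2 + (z - y) := le_antisymm (by linarith) h2
    have e4 : m2 = m1 + (y - x) := le_antisymm (by linarith) h4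
    have e5 : m1 = y - x := le_antisymm (by linarith) h5
    have e6 : m1 = 2 * x := le_antisymm (by linarith) h6
    refine ⟨by linarith, by linarith, by linarith⟩
  · rintro ⟨rfl, rfl, rfl⟩
    rw [hm3, hm2, hm1]
    norm_num
end

section
/- Let n ≥ 1 be an integer and set x = 1/(2^{n+1} − 1). Place n repeater nodes at fractional positions d_i = (2^i − 1)·x for i = 1, …, n (so that the gaps between consecutive nodes are x, 2x, 4x, …, 2^n x). Then the recursively defined arrival times satisfy t_i = 2^i · x for all i = 1, …, n, and the total transmission time equals T = max(t_n, 1 − d_n) + (1 − d_n) = 2^{n+1}/(2^{n+1} − 1). In particular, the unambiguous transmission time 2^{n+1}/(2^{n+1}−1) · L/c is achievable with n repeater nodes, for every n ≥ 1. -/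
/-- The recursively defined arrival times for a chain of repeater nodes at
fractional positions `pos 1, pos 2, …`: `t 1 = 2 * pos 1` and
`t (i+1) = max (t i) (pos (i+1) - pos i) + (pos (i+1) - pos i)`. -/
def arrivalTime (pos : ℕ → ℝ) : ℕ → ℝ
  | 0 => 0
  | 1 => 2 * pos 1
  | (i + 2) => max (arrivalTime pos (i + 1)) (pos (i + 2) - pos (i + 1))
      + (pos (i + 2) - pos (i + 1))

/-- With `n ≥ 1` repeaters at positions `d i = (2^i - 1) * x` where
`x = 1/(2^(n+1) - 1)` (so the gaps are `x, 2x, 4x, …`), the arrival times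
satisfy `t i = 2^i * x` for `1 ≤ i ≤ n`, and the total transmission time equals
`max (t n) (1 - d n) + (1 - d n) = 2^(n+1)/(2^(n+1) - 1)`. -/
theorem geometric_repeater_placement (n : ℕ) (hn : 1 ≤ n)
    (x : ℝ) (hx : x = 1 / (2 ^ (n + 1) - 1))
    (d : ℕ → ℝ) (hd : ∀ i, d i = (2 ^ i - 1) * x) :
    (∀ i, 1 ≤ i → i ≤ n → arrivalTime d i = 2 ^ i * x) ∧
    max (arrivalTime d n) (1 - d n) + (1 - d n)
      = 2 ^ (n + 1) / (2 ^ (n + 1) - 1) := by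
  have key : ∀ i, 1 ≤ i → arrivalTime d i = 2 ^ i * x := by
    intro i hi
    induction i with
    | zero => omega
    | succ k ih =>
      rcases Nat.eq_or_lt_of_le hi with h | h
      · -- k + 1 = 1
        have hk : k = 0 := by omega
        subst hk
        simp [arrivalTime, hd 1]
        ring
      · have hk : 1 ≤ k := by omega
        have ht := ih hk
        obtain ⟨m, hm⟩ : ∃ m, k = m + 1 := ⟨k - 1, by omega⟩
        subst hm
        have hgap : d (m + 2) - d (m + 1) = 2 ^ (m + 1) * x := by
          rw [hd, hd]; ring
        show max (arrivalTime d (m + 1)) (d (m + 2) - d (m + 1))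
            + (d (m + 2) - d (m + 1)) = 2 ^ (m + 2) * x
        rw [ht, hgap, max_self]
        ring
  refine ⟨fun i hi _ => key i hi, ?_⟩
  have hpow : (2:ℝ) ^ (n + 1) - 1 ≠ 0 := by
    have : (2:ℝ) ^ (n + 1) ≥ 2 ^ 1 := by
      apply pow_le_pow_right₀ (by norm_num); omega
    norm_num at this ⊢; linarith
  have hx1 : ((2:ℝ) ^ (n + 1) - 1) * x = 1 := by
    rw [hx]; field_simp
  have hlast : 1 - d n = 2 ^ n * x := by
    rw [hd]
    rw [pow_succ] at hx1
    linear_combination -hx1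
  rw [key n hn, hlast, max_self]
  have : (2:ℝ) ^ n * x + 2 ^ n * x = 2 ^ (n + 1) * x := by rw [pow_succ]; ring
  rw [this, hx]
  field_simp
end

section
/- For all real numbers x1, x2 with 0 < x1 < x2 < 1, max(1 + x1, 1 + x2 − 2·x1, 2 − x2, 2·x2 − x1) ≥ 5/4, with equality if and only if (x1, x2) = (1/4, 3/4). This gives the lower bound T(2) ≥ 5L/(4c) for the total time of unambiguous implementation of an arbitrary bipartite unitary with two repeater nodes. -/
/-- For all reals `0 < x1 < x2 < 1`,
`max(1 + x1, 1 + x2 − 2x1, 2 − x2, 2x2 − x1) ≥ 5/4`,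
with equality iff `(x1, x2) = (1/4, 3/4)`. -/
theorem two_repeater_unitary_lower_bound (x1 x2 : ℝ)
    (h0 : 0 < x1) (h12 : x1 < x2) (h21 : x2 < 1) :
    5 / 4 ≤ max (max (1 + x1) (1 + x2 - 2 * x1)) (max (2 - x2) (2 * x2 - x1)) ∧
    (max (max (1 + x1) (1 + x2 - 2 * x1)) (max (2 - x2) (2 * x2 - x1)) = 5 / 4 ↔
      x1 = 1 / 4 ∧ x2 = 3 / 4) := by
  set M := max (max (1 + x1) (1 + x2 - 2 * x1)) (max (2 - x2) (2 * x2 - x1)) with hM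
  have hA : 1 + x1 ≤ M := le_max_of_le_left (le_max_left _ _)
  have hB : 1 + x2 - 2 * x1 ≤ M := le_max_of_le_left (le_max_right _ _)
  have hC : 2 - x2 ≤ M := le_max_of_le_right (le_max_left _ _)
  have hD : 2 * x2 - x1 ≤ M := le_max_of_le_right (le_max_right _ _)
  have hge : 5 / 4 ≤ M := by linarith
  refine ⟨hge, ?_, ?_⟩
  · intro h
    constructor <;> linarith [hA.trans_eq h, hB.trans_eq h, hC.trans_eq h]
  · rintro ⟨rfl, rfl⟩
    norm_num [hM]
end

section
/- For all real numbers x1, x2 with 0 < x1 < x2 < 1, the quantity F(x1, x2) := max( max(2·x1, x2 − x1) + (x2 − x1), 1 − x2 ) + 2(1 − x2) + x2 satisfies F(x1, x2) ≥ 15/7, with equality if and only if (x1, x2) = (1/7, 3/7). Hence the total time of Protocol 2.2(x1, x2) for implementing a bipartite controlled unitary with ancillae on two repeater nodes is minimized at positions (L/7, 3L/7), where it equals 15L/(7c). -/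
/-- For all reals `0 < x1 < x2 < 1`, the total time of Protocol 2.2(x1,x2),
`F(x1,x2) = max(max(2x1, x2−x1) + (x2−x1), 1−x2) + 2(1−x2) + x2`,
is at least `15/7`, with equality iff `(x1, x2) = (1/7, 3/7)`. -/
theorem protocol_2_2_time (x1 x2 : ℝ)
    (h0 : 0 < x1) (h12 : x1 < x2) (h21 : x2 < 1) :
    15 / 7 ≤ max (max (2 * x1) (x2 - x1) + (x2 - x1)) (1 - x2)
        + 2 * (1 - x2) + x2 ∧
    (max (max (2 * x1) (x2 - x1) + (x2 - x1)) (1 - x2) + 2 * (1 - x2) + x2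
        = 15 / 7 ↔ x1 = 1 / 7 ∧ x2 = 3 / 7) := by
  have hA : 2 * x1 ≤ max (2 * x1) (x2 - x1) := le_max_left _ _
  have hB : x2 - x1 ≤ max (2 * x1) (x2 - x1) := le_max_right _ _
  have hM1 : max (2 * x1) (x2 - x1) + (x2 - x1) ≤
      max (max (2 * x1) (x2 - x1) + (x2 - x1)) (1 - x2) := le_max_left _ _
  have hM2 : 1 - x2 ≤ max (max (2 * x1) (x2 - x1) + (x2 - x1)) (1 - x2) :=
    le_max_right _ _
  refine ⟨by linarith, ?_, ?_⟩
  · intro h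
    constructor <;> linarith
  · rintro ⟨rfl, rfl⟩
    norm_num
end

section
/- For all real numbers x1, x2 with 0 < x1 < x2 < 1, the quantity T(x1, x2) := max( 2(1 − x2), max(2·x1, x2 − x1) + (x2 − x1) ) + max(x2, 1 − x2) satisfies T(x1, x2) ≥ 7/5, with equality if and only if (x1, x2) = (1/5, 3/5). Hence the total time of Protocol 3.2(x1, x2) for implementing a bipartite unitary of double-group form with two repeater nodes is minimized at positions (L/5, 3L/5), where it equals 7L/(5c). -/
/-!
Bounding the broadcast term `max x2 (1 - x2)` below by `x2`, `T(x1, x2)` dominates the three affine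
functions `2 - x2`, `x1 + 2 x2` and `3 x2 - 2 x1`. Their convex combination with weights
`7/10, 1/5, 1/10` is the constant `7/5`, so `T ≥ 7/5`; equality forces all three to equal `7/5`,
a linear system whose only solution is `(1/5, 3/5)`, where `T` is indeed `7/5`.
-/

noncomputable def protocolTime (x1 x2 : ℝ) : ℝ :=
  max (2 * (1 - x2)) (max (2 * x1) (x2 - x1) + (x2 - x1)) + max x2 (1 - x2)

lemma affine_minorants_le_protocolTime (x1 x2 : ℝ) :
    2 - x2 ≤ protocolTime x1 x2 ∧ x1 + 2 * x2 ≤ protocolTime x1 x2 ∧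
      3 * x2 - 2 * x1 ≤ protocolTime x1 x2 := by
  unfold protocolTime
  have hB : x2 ≤ max x2 (1 - x2) := le_max_left _ _
  have hA₁ : 2 * (1 - x2) ≤ max (2 * (1 - x2)) (max (2 * x1) (x2 - x1) + (x2 - x1)) :=
    le_max_left _ _
  have hA₂ : max (2 * x1) (x2 - x1) + (x2 - x1) ≤
      max (2 * (1 - x2)) (max (2 * x1) (x2 - x1) + (x2 - x1)) :=
    le_max_right _ _
  have hC₁ : 2 * x1 ≤ max (2 * x1) (x2 - x1) := le_max_left _ _
  have hC₂ : x2 - x1 ≤ max (2 * x1) (x2 - x1) := le_max_right _ _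
  refine ⟨?_, ?_, ?_⟩ <;> linarith

lemma seven_fifths_le_protocolTime (x1 x2 : ℝ) : 7 / 5 ≤ protocolTime x1 x2 := by
  obtain ⟨h₁, h₂, h₃⟩ := affine_minorants_le_protocolTime x1 x2
  linarith

lemma protocolTime_eq_seven_fifths_iff (x1 x2 : ℝ) :
    protocolTime x1 x2 = 7 / 5 ↔ x1 = 1 / 5 ∧ x2 = 3 / 5 := by
  constructor
  · intro h
    obtain ⟨h₁, h₂, h₃⟩ := affine_minorants_le_protocolTime x1 x2
    constructor <;> linarith
  · rintro ⟨rfl, rfl⟩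
    norm_num [protocolTime]

theorem protocol_3_2_time_general (x1 x2 : ℝ) :
    7 / 5 ≤ max (2 * (1 - x2)) (max (2 * x1) (x2 - x1) + (x2 - x1))
        + max x2 (1 - x2) ∧
    (max (2 * (1 - x2)) (max (2 * x1) (x2 - x1) + (x2 - x1)) + max x2 (1 - x2)
        = 7 / 5 ↔ x1 = 1 / 5 ∧ x2 = 3 / 5) :=
  ⟨seven_fifths_le_protocolTime x1 x2, protocolTime_eq_seven_fifths_iff x1 x2⟩

/-- For all reals `0 < x1 < x2 < 1`, the total time of Protocol 3.2(x1,x2),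
`T(x1,x2) = max(2(1−x2), max(2x1, x2−x1) + (x2−x1)) + max(x2, 1−x2)`,
is at least `7/5`, with equality iff `(x1, x2) = (1/5, 3/5)`. -/
theorem protocol_3_2_time (x1 x2 : ℝ)
    (h0 : 0 < x1) (h12 : x1 < x2) (h21 : x2 < 1) :
    7 / 5 ≤ max (2 * (1 - x2)) (max (2 * x1) (x2 - x1) + (x2 - x1))
        + max x2 (1 - x2) ∧
    (max (2 * (1 - x2)) (max (2 * x1) (x2 - x1) + (x2 - x1)) + max x2 (1 - x2)
        = 7 / 5 ↔ x1 = 1 / 5 ∧ x2 = 3 / 5) :=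
  protocol_3_2_time_general x1 x2
end

section
/- Let P, A, B be points in a Euclidean space with A ≠ P and B ≠ P, and let θ = ∠APB be the angle at P. Then dist(A, B) ≥ (dist(A, P) + dist(B, P)) · sin(θ/2), and equality holds if dist(A, P) = dist(B, P) (more precisely, equality holds if and only if dist(A, P) = dist(B, P) or θ = π). Equivalently, (dist(A, P) + dist(B, P)) / dist(A, B) ≤ 1/sin(θ/2) whenever θ > 0. -/
open EuclideanGeometry Real

/-- For points `P, A, B` with `A ≠ P` and `B ≠ P` and `θ = ∠APB`:
`dist A B ≥ (dist A P + dist B P) · sin(θ/2)`, with equality iff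
`dist A P = dist B P` or `θ = π`; equivalently,
`(dist A P + dist B P)/dist A B ≤ 1/sin(θ/2)` whenever `θ > 0`. -/
theorem dist_ge_sum_mul_sin_half_angle
    {V : Type*} [NormedAddCommGroup V] [InnerProductSpace ℝ V]
    (P A B : V) (hA : A ≠ P) (hB : B ≠ P) :
    (dist A P + dist B P) * Real.sin (∠ A P B / 2) ≤ dist A B ∧
    (dist A B = (dist A P + dist B P) * Real.sin (∠ A P B / 2) ↔
      dist A P = dist B P ∨ ∠ A P B = π) ∧
    (0 < ∠ A P B →
      (dist A P + dist B P) / dist A B ≤ 1 / Real.sin (∠ A P B / 2)) := by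
  set a := dist A P with ha'
  set b := dist B P with hb'
  set θ := ∠ A P B with hθ'
  have ha : 0 < a := dist_pos.2 hA
  have hb : 0 < b := dist_pos.2 hB
  have hθ0 : 0 ≤ θ := angle_nonneg A P B
  have hθπ : θ ≤ π := angle_le_pi A P B
  have hs0 : 0 ≤ Real.sin (θ / 2) :=
    Real.sin_nonneg_of_nonneg_of_le_pi (by linarith) (by linarith [Real.pi_pos])
  have hd0 : 0 ≤ dist A B := dist_nonneg
  have hcos : dist A B ^ 2 = a ^ 2 + b ^ 2 - 2 * a * b * Real.cos θ := by
    have := EuclideanGeometry.law_cos A P B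
    nlinarith [this]
  have hsin : Real.sin (θ / 2) ^ 2 = (1 - Real.cos θ) / 2 := by
    have h := Real.cos_sq (θ / 2)
    have h2 : 2 * (θ / 2) = θ := by ring
    rw [h2] at h
    nlinarith [Real.sin_sq_add_cos_sq (θ / 2)]
  have hc2 : -1 ≤ Real.cos θ := Real.neg_one_le_cos θ
  have key : dist A B ^ 2 - ((a + b) * Real.sin (θ / 2)) ^ 2
      = (a - b) ^ 2 * (1 + Real.cos θ) / 2 := by
    rw [hcos, mul_pow, hsin]; ring
  have h1 : (a + b) * Real.sin (θ / 2) ≤ dist A B := by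
    have hsq : ((a + b) * Real.sin (θ / 2)) ^ 2 ≤ dist A B ^ 2 := by
      nlinarith [sq_nonneg (a - b)]
    nlinarith [mul_nonneg (mul_nonneg (le_of_lt (by linarith : (0:ℝ) < a + b)) hs0) hd0]
  have h2 : dist A B = (a + b) * Real.sin (θ / 2) ↔ a = b ∨ θ = π := by
    constructor
    · intro h
      have h0 : (a - b) ^ 2 * (1 + Real.cos θ) = 0 := by
        have := key
        rw [h] at this
        linarith
      rcases mul_eq_zero.1 h0 with h' | h'
      · left
        have : a - b = 0 := by
          have := sq_eq_zero_iff.1 h'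
          exact this
        linarith
      · right
        have hcπ : Real.cos θ = -1 := by linarith
        have : Real.cos θ = Real.cos π := by rw [hcπ, Real.cos_pi]
        exact Real.injOn_cos ⟨hθ0, hθπ⟩ ⟨le_of_lt Real.pi_pos, le_refl π⟩ this
    · intro h
      have h0 : (a - b) ^ 2 * (1 + Real.cos θ) = 0 := by
        rcases h with h | h
        · rw [h]; ring
        · rw [h, Real.cos_pi]; ring
      have hsq : dist A B ^ 2 = ((a + b) * Real.sin (θ / 2)) ^ 2 := by linarith
      have hsnn : 0 ≤ (a + b) * Real.sin (θ / 2) := by positivity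
      nlinarith
  refine ⟨h1, h2, ?_⟩
  intro hθpos
  have hspos : 0 < Real.sin (θ / 2) :=
    Real.sin_pos_of_pos_of_lt_pi (by linarith) (by linarith [Real.pi_pos])
  have hdpos : 0 < dist A B := by
    rcases lt_or_eq_of_le hd0 with h | h
    · exact h
    · exfalso
      have := h1
      rw [← h] at this
      nlinarith
  rw [div_le_div_iff₀ hdpos hspos]
  linarith [h1]
end

section
/- Let P, A, B be points in a Euclidean space with A ≠ P and B ≠ P, and suppose the angle ∠APB equals 2π/3 (as when P is the center of an equilateral triangle of verifiers and A, B lie on the segments from P to two vertices). Then dist(A, P) + dist(B, P) ≤ (2/√3) · dist(A, B), with equality if and only if dist(A, P) = dist(B, P); moreover 2/√3 < 3/2. Consequently, since any attack with at most one intermediate node takes time at least (3/2)·dist(A,B)/c between the end nodes A and B while the honest prover takes (dist(A,P) + dist(B,P))/c, the attack always takes strictly longer than the honest protocol. -/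
/-!
By the law of cosines, an angle of `2π/3` at `P` gives `d² = x² + y² + x y` for
`x = |AP|`, `y = |BP|`, `d = |AB|`, hence `4 d² = 3 (x + y)² + (x - y)²`.
-/

open EuclideanGeometry Real

namespace Real

theorem cos_two_mul_pi_div_three : cos (2 * π / 3) = -(1 / 2) := by
  rw [show 2 * π / 3 = π - π / 3 by ring, cos_pi_sub, cos_pi_div_three]

theorem two_div_sqrt_three_lt_three_div_two : 2 / √3 < 3 / 2 := by
  have hs : √3 ^ 2 = 3 := sq_sqrt (by norm_num)
  rw [div_lt_div_iff₀ (by positivity) two_pos]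
  nlinarith [sqrt_nonneg 3]

end Real

section TwoThirdsPi

variable {x y d : ℝ}

theorem sqrt_three_mul_add_sq_add_sub_sq (x y : ℝ) :
    (√3 * (x + y)) ^ 2 + (x - y) ^ 2 = 4 * (x ^ 2 + y ^ 2 + x * y) := by
  rw [mul_pow, sq_sqrt (by norm_num)]
  ring

theorem add_le_two_div_sqrt_three_mul (hd : 0 ≤ d) (h : d ^ 2 = x ^ 2 + y ^ 2 + x * y) :
    x + y ≤ 2 / √3 * d := by
  rw [div_mul_eq_mul_div, le_div_iff₀' (by positivity)]
  have hsq : (√3 * (x + y)) ^ 2 ≤ (2 * d) ^ 2 := by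
    nlinarith [sqrt_three_mul_add_sq_add_sub_sq x y, sq_nonneg (x - y)]
  exact (abs_le_of_sq_le_sq' hsq (by positivity)).2

theorem add_eq_two_div_sqrt_three_mul_iff (hxy : 0 ≤ x + y) (hd : 0 ≤ d)
    (h : d ^ 2 = x ^ 2 + y ^ 2 + x * y) : x + y = 2 / √3 * d ↔ x = y := by
  have key := sqrt_three_mul_add_sq_add_sub_sq x y
  calc x + y = 2 / √3 * d ↔ √3 * (x + y) = 2 * d := by
        rw [div_mul_eq_mul_div, eq_div_iff (by positivity), mul_comm]
    _ ↔ (√3 * (x + y)) ^ 2 = (2 * d) ^ 2 := (sq_eq_sq₀ (by positivity) (by positivity)).symm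
    _ ↔ (x - y) ^ 2 = 0 := by constructor <;> intro <;> nlinarith
    _ ↔ x = y := by rw [sq_eq_zero_iff, sub_eq_zero]

end TwoThirdsPi

namespace EuclideanGeometry

variable {V P : Type*} [NormedAddCommGroup V] [InnerProductSpace ℝ V] [MetricSpace P]
  [NormedAddTorsor V P] {p₁ p₂ p₃ : P}

theorem left_ne_of_angle_ne_pi_div_two (h : ∠ p₁ p₂ p₃ ≠ π / 2) : p₁ ≠ p₂ := by
  rintro rfl
  exact h (angle_self_left _ _)

theorem right_ne_of_angle_ne_pi_div_two (h : ∠ p₁ p₂ p₃ ≠ π / 2) : p₃ ≠ p₂ := by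
  rintro rfl
  exact h (angle_self_right _ _)

theorem dist_sq_eq_of_angle_eq_two_mul_pi_div_three (h : ∠ p₁ p₂ p₃ = 2 * π / 3) :
    dist p₁ p₃ ^ 2 = dist p₁ p₂ ^ 2 + dist p₃ p₂ ^ 2 + dist p₁ p₂ * dist p₃ p₂ := by
  have := dist_sq_eq_dist_sq_add_dist_sq_sub_two_mul_dist_mul_dist_mul_cos_angle p₁ p₂ p₃
  rw [h, cos_two_mul_pi_div_three] at this
  linear_combination this

end EuclideanGeometry

theorem equilateral_triangle_attack_slower_general
    {V : Type*} [NormedAddCommGroup V] [InnerProductSpace ℝ V]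
    (P A B : V)
    (hangle : ∠ A P B = 2 * π / 3) (c : ℝ) (hc : 0 < c) :
    dist A P + dist B P ≤ (2 / Real.sqrt 3) * dist A B ∧
    (dist A P + dist B P = (2 / Real.sqrt 3) * dist A B ↔ dist A P = dist B P) ∧
    (2 / Real.sqrt 3 < 3 / 2) ∧
    (dist A P + dist B P) / c < (3 / 2) * dist A B / c := by
  have hright : ∠ A P B ≠ π / 2 := by rw [hangle]; linarith [pi_pos]
  have hA : 0 < dist A P := dist_pos.2 (left_ne_of_angle_ne_pi_div_two hright)
  have hB : 0 < dist B P := dist_pos.2 (right_ne_of_angle_ne_pi_div_two hright)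
  have hlaw := dist_sq_eq_of_angle_eq_two_mul_pi_div_three hangle
  have hle := add_le_two_div_sqrt_three_mul dist_nonneg hlaw
  have hAB : 0 < dist A B := pos_of_mul_pos_right (by linarith) (by positivity)
  refine ⟨hle, add_eq_two_div_sqrt_three_mul_iff (by positivity) dist_nonneg hlaw,
    two_div_sqrt_three_lt_three_div_two, ?_⟩
  gcongr
  exact hle.trans_lt (mul_lt_mul_of_pos_right two_div_sqrt_three_lt_three_div_two hAB)

/-- If the angle `∠ A P B` is `2π/3`, then
`dist A P + dist B P ≤ (2/√3) · dist A B` with equality iff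
`dist A P = dist B P`; moreover `2/√3 < 3/2`, so the attacker's required time
`(3/2)·dist A B / c` strictly exceeds the honest prover's time
`(dist A P + dist B P)/c`. -/
theorem equilateral_triangle_attack_slower
    {V : Type*} [NormedAddCommGroup V] [InnerProductSpace ℝ V]
    (P A B : V) (hA : A ≠ P) (hB : B ≠ P)
    (hangle : ∠ A P B = 2 * π / 3) (c : ℝ) (hc : 0 < c) :
    dist A P + dist B P ≤ (2 / Real.sqrt 3) * dist A B ∧
    (dist A P + dist B P = (2 / Real.sqrt 3) * dist A B ↔ dist A P = dist B P) ∧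
    (2 / Real.sqrt 3 < 3 / 2) ∧
    (dist A P + dist B P) / c < (3 / 2) * dist A B / c :=
  equilateral_triangle_attack_slower_general P A B hangle c hc
end

section
/- Let P, A, B be points in a Euclidean space with A ≠ P and B ≠ P, and suppose the angle θ = ∠APB satisfies θ ≥ 2·arcsin(2/3). Then dist(A, P) + dist(B, P) ≤ (3/2) · dist(A, B). Hence, if the three angles at the prover P subtended by the pairs of verifiers all exceed 2·arcsin(2/3), then for the attacker's end nodes A, B on the segments from P to any two verifiers, the attacker's minimum time (3/2)|AB|/c from Theorem 1(ii) is at least the honest prover's time (|AP| + |BP|)/c, so the pairwise two-verifier position-verification scheme remains secure against an attacker with at most three nodes. -/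
open EuclideanGeometry Real

/-- If the angle `θ = ∠ A P B` satisfies `θ ≥ 2·arcsin(2/3)`, then
`dist A P + dist B P ≤ (3/2) · dist A B`; hence the attacker's minimum time
`(3/2)·dist A B/c` is at least the honest prover's time
`(dist A P + dist B P)/c`. -/
theorem wide_angle_attack_not_faster
    {V : Type*} [NormedAddCommGroup V] [InnerProductSpace ℝ V]
    (P A B : V) (hA : A ≠ P) (hB : B ≠ P)
    (hangle : 2 * Real.arcsin (2 / 3) ≤ ∠ A P B) (c : ℝ) (hc : 0 < c) :
    dist A P + dist B P ≤ (3 / 2) * dist A B ∧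
    (dist A P + dist B P) / c ≤ (3 / 2) * dist A B / c := by
  set θ := ∠ A P B with hθ
  have hθ0 : 0 ≤ θ := angle_nonneg A P B
  have hθπ : θ ≤ π := angle_le_pi A P B
  have hπ := Real.pi_pos
  -- sin (θ/2) ≥ 2/3
  have hs : (2 / 3 : ℝ) ≤ Real.sin (θ / 2) := by
    rw [← Real.arcsin_le_iff_le_sin (by norm_num)
      ⟨by linarith, by linarith⟩]
    linarith
  -- law of cosines
  have hlaw := EuclideanGeometry.law_cos A P B
  have hs2 : Real.sin (θ / 2) ^ 2 = (1 - Real.cos θ) / 2 := by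
    have h1 := Real.cos_sq_add_sin_sq (θ / 2)
    have h2 : Real.cos θ = 2 * Real.cos (θ / 2) ^ 2 - 1 := by
      have := Real.cos_two_mul (θ / 2)
      rwa [show 2 * (θ / 2) = θ by ring] at this
    nlinarith
  have hcos1 : -1 ≤ Real.cos θ := Real.neg_one_le_cos θ
  set a := dist A P
  set b := dist B P
  have ha : 0 ≤ a := dist_nonneg
  have hb : 0 ≤ b := dist_nonneg
  have hAB : 0 ≤ dist A B := dist_nonneg
  -- key inequality: ((a+b) * sin(θ/2))^2 ≤ (dist A B)^2
  have hkey : ((a + b) * Real.sin (θ / 2)) ^ 2 ≤ dist A B ^ 2 := by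
    have : ((a + b) * Real.sin (θ / 2)) ^ 2 = (a + b) ^ 2 * ((1 - Real.cos θ) / 2) := by
      rw [mul_pow, hs2]
    rw [this]
    nlinarith [sq_nonneg (a - b), hlaw]
  have hsin_nonneg : 0 ≤ Real.sin (θ / 2) := by linarith
  have h1 : (a + b) * Real.sin (θ / 2) ≤ dist A B := by
    nlinarith [hkey, mul_nonneg (add_nonneg ha hb) hsin_nonneg]
  have h2 : (a + b) * (2 / 3) ≤ (a + b) * Real.sin (θ / 2) :=
    mul_le_mul_of_nonneg_left hs (by linarith)
  have hmain : a + b ≤ (3 / 2) * dist A B := by linarith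
  exact ⟨hmain, by gcongr⟩
end
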